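/- Let d ≥ 2, let t be a homogeneous term in r variables, and let c ∈ ℤ. The DFA A^{d|t+c} with state set {q_I, 0, 1, …, d−1}, initial state q_I, transition δ(q_I, b) := rem(t[σ(b)], d) and δ(q, b) := rem(ρ·q + t[b], d) for q ∈ {0,…,d−1}, and accepting states {q ∈ {0,…,d−1} : d divides q + c}, represents the set {a ∈ ℤ^r : d divides t[a] + c} and has d + 1 states. In particular, for every nonempty word w ∈ (Σ^r)^+, δ̂(q_I, w) = rem(t[⟨w⟩_ℤ], d). -/

import Mathlib

namespace Presburger

/-- A letter of the alphabet `Σ^r`, where `Σ = {0, …, ρ-1}`. -/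
abbrev Letter (ρ r : ℕ) := Fin r → Fin ρ

/-- The natural number encoded by a word over `Σ` (most significant digit first). -/
def natVal (ρ : ℕ) (w : List ℕ) : ℕ := w.foldl (fun acc b => ρ * acc + b) 0

/-- The integer encoded by a nonempty word over `Σ` (ρ's complement,
most significant digit first); the empty word gets the junk value `0`. -/
def intVal (ρ : ℕ) : List ℕ → ℤ
  | [] => 0
  | b :: u => (natVal ρ u : ℤ) - (if b = 0 then 0 else (ρ : ℤ) ^ u.length)

/-- The tuple of natural numbers encoded track-wise by a word over `Σ^r` (as integers). -/
def natVec (ρ r : ℕ) (w : List (Letter ρ r)) : Fin r → ℤ :=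
  fun i => (natVal ρ (w.map fun b => (b i : ℕ)) : ℤ)

/-- The tuple of integers encoded track-wise by a nonempty word over `Σ^r`. -/
def intVec (ρ r : ℕ) (w : List (Letter ρ r)) : Fin r → ℤ :=
  fun i => intVal ρ (w.map fun b => (b i : ℕ))

/-- A language over `Σ^r` represents a set `U ⊆ ℤ^r` if it consists exactly of the
nonempty words encoding a member of `U`. -/
def Represents (ρ r : ℕ) (L : Language (Letter ρ r)) (U : Set (Fin r → ℤ)) : Prop :=
  ∀ w : List (Letter ρ r), w ∈ L ↔ (w ≠ [] ∧ intVec ρ r w ∈ U)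

/-- A DFA represents `U ⊆ ℤ^r` if its accepted language does. -/
def DFARepresents (ρ r : ℕ) {σ : Type*} (M : DFA (Letter ρ r) σ) (U : Set (Fin r → ℤ)) : Prop :=
  Represents ρ r M.accepts U

/-- Value of the homogeneous term with coefficients `k` at the point `a`. -/
def tval {r : ℕ} (k : Fin r → ℤ) (a : Fin r → ℤ) : ℤ := ∑ i, k i * a i

/-- A homogeneous term is `0` or has all its coefficients nonzero. -/
def Homog {r : ℕ} (k : Fin r → ℤ) : Prop := k = 0 ∨ ∀ i, k i ≠ 0

/-- `σ(b)`: componentwise `0` if the digit is `0` and `-1` otherwise. -/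
def sgnLetter {ρ r : ℕ} (b : Letter ρ r) : Fin r → ℤ :=
  fun i => if (b i : ℕ) = 0 then 0 else -1

/-- The letter `b` viewed as a tuple of integers. -/
def letterInt {ρ r : ℕ} (b : Letter ρ r) : Fin r → ℤ := fun i => ((b i : ℕ) : ℤ)

/-- `‖t‖⁺`: the sum of the positive coefficients of `t`. -/
def posNorm {r : ℕ} (k : Fin r → ℤ) : ℤ := ∑ i, max (k i) 0

/-- `‖t‖⁻`: the sum of the absolute values of the negative coefficients of `t`. -/
def negNorm {r : ℕ} (k : Fin r → ℤ) : ℤ := ∑ i, max (-k i) 0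

/-- `gcd(t)`: the gcd of the absolute values of the coefficients of `t`. -/
def gcdT {r : ℕ} (k : Fin r → ℤ) : ℕ := Finset.univ.gcd fun i => (k i).natAbs

/-- The transition function `η` of the infinite-state automaton for `t`,
restricted to the integer states: `η(q, b) = ρ·q + t[b]`. -/
def etaStep (ρ : ℕ) {r : ℕ} (k : Fin r → ℤ) (q : ℤ) (b : Letter ρ r) : ℤ :=
  ρ * q + tval k (letterInt b)

/-- The transition of `η` out of the initial state: `η(q_I, b) = t[σ(b)]`. -/
def etaInit (ρ : ℕ) {r : ℕ} (k : Fin r → ℤ) (b : Letter ρ r) : ℤ :=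
  tval k (sgnLetter b)

/-- A state `q` is small (for `t ⋈ c`) if `q < min{c, -‖t‖⁺}`. -/
def IsSmall {r : ℕ} (k : Fin r → ℤ) (c q : ℤ) : Prop := q < min c (-posNorm k)

/-- A state `q` is large (for `t ⋈ c`) if `q > max{c, ‖t‖⁻}`. -/
def IsLarge {r : ℕ} (k : Fin r → ℤ) (c q : ℤ) : Prop := max c (negNorm k) < q

/-- The six relations `=, ≠, <, ≤, >, ≥` on `ℤ`. -/
def rel6 : Set (ℤ → ℤ → Prop) :=
  {fun x y => x = y, fun x y => x ≠ y, fun x y => x < y,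
   fun x y => x ≤ y, fun x y => x > y, fun x y => x ≥ y}

/-- Clamp an integer into the state set `{m, …, n}`; yields `none` (the initial state)
only in the degenerate case `m > n`, which never occurs for small `m` and large `n`. -/
noncomputable def clampSt (m n x : ℤ) : Option ↥(Finset.Icc m n) :=
  if h : max m (min n x) ∈ Finset.Icc m n then some ⟨max m (min n x), h⟩ else none

/-- The DFA `A^{t ⋈ c}_{(m,n)}` for the (in)equation `t ⋈ c`: states are
`q_I = none` together with `{m, …, n}`, transitions clamp `η` to `[m, n]`, and the
accepting states are the integer states `q` with `q ⋈ c`. -/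
noncomputable def ineqDFA (ρ : ℕ) {r : ℕ} (k : Fin r → ℤ) (m n : ℤ) (rel : ℤ → ℤ → Prop) (c : ℤ) :
    DFA (Letter ρ r) (Option ↥(Finset.Icc m n)) where
  step q b :=
    match q with
    | none => clampSt m n (etaInit ρ k b)
    | some z => clampSt m n (etaStep ρ k z.val b)
  start := none
  accept := {q | ∃ z : ↥(Finset.Icc m n), q = some z ∧ rel z.val c}

/-- Two states of a DFA are equivalent if they accept exactly the same words. -/
def stEquiv {α : Type*} {σ : Type*} (M : DFA α σ) (p q : σ) : Prop :=
  ∀ w : List α, (M.evalFrom p w ∈ M.accept ↔ M.evalFrom q w ∈ M.accept)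

end Presburger

namespace Presburger

/-- The state `rem(x, d) ∈ {0, …, d-1}` of the divisibility automaton
(`none` only in the degenerate case `d ≤ 0`). -/
noncomputable def mkDivSt (d x : ℤ) : Option ↥(Finset.Ico (0 : ℤ) d) :=
  if h : x % d ∈ Finset.Ico (0 : ℤ) d then some ⟨x % d, h⟩ else none

/-- The DFA `A^{d | t + c}`: states are `q_I = none` together with the
remainders `{0, …, d-1}`; `δ(q_I, b) = rem(t[σ(b)], d)`,
`δ(q, b) = rem(ρ·q + t[b], d)`, and a remainder state `q` is accepting iff
`d ∣ q + c`. -/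
noncomputable def divDFA (ρ : ℕ) {r : ℕ} (k : Fin r → ℤ) (d c : ℤ) :
    DFA (Letter ρ r) (Option ↥(Finset.Ico (0 : ℤ) d)) where
  step q b :=
    match q with
    | none => mkDivSt d (etaInit ρ k b)
    | some z => mkDivSt d (etaStep ρ k z.val b)
  start := none
  accept := {q | ∃ z : ↥(Finset.Ico (0 : ℤ) d), q = some z ∧ d ∣ z.val + c}

/- Reading one more letter `b` maps the value `x` of a track to `ρ x + b`, both for natural
numbers and in ρ's complement; the value of `t` on the encoded tuple therefore evolves by `η`,
starting from `t[σ(b)]` after the first letter. Since `η(q, b) = ρ q + t[b]` is compatible with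
reduction modulo `d`, the divisibility automaton, which stores `rem(q, d)`, tracks
`rem(t[⟨w⟩_ℤ], d)`; acceptance is then `d ∣ rem(t[⟨w⟩_ℤ], d) + c`, i.e. `d ∣ t[⟨w⟩_ℤ] + c`. -/

lemma natVal_append_singleton (ρ : ℕ) (u : List ℕ) (a : ℕ) :
    natVal ρ (u ++ [a]) = ρ * natVal ρ u + a := by
  simp [natVal, List.foldl_append]

lemma intVal_append_singleton (ρ : ℕ) {u : List ℕ} (hu : u ≠ []) (a : ℕ) :
    intVal ρ (u ++ [a]) = ρ * intVal ρ u + a := by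
  obtain ⟨b, u, rfl⟩ := List.exists_cons_of_ne_nil hu
  simp only [List.cons_append, intVal, natVal_append_singleton, List.length_append,
    List.length_cons, List.length_nil]
  push_cast
  split <;> ring

lemma intVec_append_singleton (ρ r : ℕ) {w : List (Letter ρ r)} (hw : w ≠ []) (b : Letter ρ r) :
    intVec ρ r (w ++ [b]) = fun i => ρ * intVec ρ r w i + letterInt b i := by
  funext i
  simp only [intVec, List.map_append, List.map_singleton]
  exact intVal_append_singleton ρ (by simpa using hw) _

lemma intVec_singleton (ρ r : ℕ) (b : Letter ρ r) : intVec ρ r [b] = sgnLetter b := by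
  funext i
  simp only [intVec, intVal, natVal, sgnLetter, List.map_cons, List.map_nil, List.foldl_nil,
    List.length_nil, pow_zero, Nat.cast_zero, zero_sub]
  split <;> simp

lemma tval_mul_add {r : ℕ} (k : Fin r → ℤ) (m : ℤ) (a b : Fin r → ℤ) :
    tval k (fun i => m * a i + b i) = m * tval k a + tval k b := by
  simp only [tval, Finset.mul_sum, ← Finset.sum_add_distrib]
  exact Finset.sum_congr rfl fun i _ => by ring

lemma tval_intVec_append_singleton (ρ r : ℕ) (k : Fin r → ℤ) {w : List (Letter ρ r)}
    (hw : w ≠ []) (b : Letter ρ r) :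
    tval k (intVec ρ r (w ++ [b])) = etaStep ρ k (tval k (intVec ρ r w)) b := by
  rw [intVec_append_singleton ρ r hw, tval_mul_add, etaStep]

lemma tval_intVec_singleton (ρ r : ℕ) (k : Fin r → ℤ) (b : Letter ρ r) :
    tval k (intVec ρ r [b]) = etaInit ρ k b := by
  rw [intVec_singleton, etaInit]

lemma etaStep_emod (ρ : ℕ) {r : ℕ} (k : Fin r → ℤ) (d q : ℤ) (b : Letter ρ r) :
    etaStep ρ k (q % d) b % d = etaStep ρ k q b % d :=
  ((Int.mod_modEq q d).mul_left ρ).add_right _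

lemma mkDivSt_of_pos {d : ℤ} (hd : 0 < d) (x : ℤ) :
    mkDivSt d x =
      some ⟨x % d, Finset.mem_Ico.2 ⟨Int.emod_nonneg x hd.ne', Int.emod_lt_of_pos x hd⟩⟩ :=
  dif_pos _

lemma mkDivSt_emod (d x : ℤ) : mkDivSt d (x % d) = mkDivSt d x := by
  simp only [mkDivSt, Int.emod_emod_of_dvd x dvd_rfl]

section divDFA

variable (ρ : ℕ) {r : ℕ} (k : Fin r → ℤ) {d : ℤ} (c : ℤ)

lemma divDFA_step_mkDivSt (hd : 0 < d) (x : ℤ) (b : Letter ρ r) :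
    (divDFA ρ k d c).step (mkDivSt d x) b = mkDivSt d (etaStep ρ k x b) := by
  rw [mkDivSt_of_pos hd]
  change mkDivSt d (etaStep ρ k (x % d) b) = _
  rw [← mkDivSt_emod, etaStep_emod, mkDivSt_emod]

lemma divDFA_eval (hd : 0 < d) {w : List (Letter ρ r)} (hw : w ≠ []) :
    (divDFA ρ k d c).eval w = mkDivSt d (tval k (intVec ρ r w)) := by
  induction w using List.reverseRecOn with
  | nil => exact absurd rfl hw
  | append_singleton u b ih =>
    rw [DFA.eval_append_singleton]
    rcases eq_or_ne u [] with rfl | hu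
    · rw [List.nil_append, tval_intVec_singleton]
      rfl
    · rw [ih hu, divDFA_step_mkDivSt ρ k c hd, tval_intVec_append_singleton ρ r k hu]

lemma mkDivSt_mem_divDFA_accept (hd : 0 < d) (x : ℤ) :
    mkDivSt d x ∈ (divDFA ρ (r := r) k d c).accept ↔ d ∣ x + c := by
  rw [mkDivSt_of_pos hd]
  change (∃ z, _ = some z ∧ _) ↔ _
  simp only [Option.some.injEq, exists_eq_left']
  exact ((Int.mod_modEq x d).add_right c).dvd_iff

lemma start_not_mem_divDFA_accept :
    (divDFA ρ (r := r) k d c).start ∉ (divDFA ρ k d c).accept :=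
  fun ⟨_, h, _⟩ => Option.some_ne_none _ h.symm

lemma divDFA_represents (hd : 0 < d) :
    DFARepresents ρ r (divDFA ρ k d c) {a | d ∣ tval k a + c} := by
  intro w
  rcases eq_or_ne w [] with rfl | hw
  · simpa [DFA.mem_accepts] using start_not_mem_divDFA_accept ρ k c
  · rw [DFA.mem_accepts, divDFA_eval ρ k c hd hw, mkDivSt_mem_divDFA_accept ρ k c hd]
    exact (and_iff_right hw).symm

end divDFA

lemma card_option_Ico {d : ℤ} (hd : 0 ≤ d) :
    (Fintype.card (Option ↥(Finset.Ico (0 : ℤ) d)) : ℤ) = d + 1 := by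
  rw [Fintype.card_option, Fintype.card_coe, Int.card_Ico, sub_zero]
  push_cast
  rw [Int.toNat_of_nonneg hd]

theorem stmt_9_general (ρ r : ℕ) (k : Fin r → ℤ)
    (d c : ℤ) (hd : 2 ≤ d) :
    DFARepresents ρ r (divDFA ρ k d c) {a | d ∣ tval k a + c} ∧
    (Fintype.card (Option ↥(Finset.Ico (0 : ℤ) d)) : ℤ) = d + 1 ∧
    ∀ w : List (Letter ρ r), w ≠ [] →
      (divDFA ρ k d c).eval w = mkDivSt d (tval k (intVec ρ r w)) := by
  have hd0 : 0 < d := by omega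
  exact ⟨divDFA_represents ρ k c hd0, card_option_Ico hd0.le,
    fun _ hw => divDFA_eval ρ k c hd0 hw⟩

/-- Lemma `bound_automata_divisibility`.
For `d ≥ 2`, the DFA `A^{d | t + c}` represents `{a ∈ ℤ^r : d ∣ t[a] + c}` and
has `d + 1` states; moreover for every nonempty word `w`,
`δ̂(q_I, w) = rem(t[⟨w⟩_ℤ], d)`. -/
theorem stmt_9 (ρ r : ℕ) (hρ : 2 ≤ ρ) (k : Fin r → ℤ) (hk : Homog k)
    (d c : ℤ) (hd : 2 ≤ d) :
    DFARepresents ρ r (divDFA ρ k d c) {a | d ∣ tval k a + c} ∧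
    (Fintype.card (Option ↥(Finset.Ico (0 : ℤ) d)) : ℤ) = d + 1 ∧
    ∀ w : List (Letter ρ r), w ≠ [] →
      (divDFA ρ k d c).eval w = mkDivSt d (tval k (intVec ρ r w)) :=
  stmt_9_general ρ r k d c hd

end Presburger
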